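/- In the latent class model with covariates, fix item probabilities π with all entries strictly positive and current coefficients β = (β_1,…,β_{R−1}) with β_R = 0, and fix a class index r ∈ {1,…,R−1}. Compute the responsibilities s̄ᵢᵣ = ν_r(x_i)·Π_j π_{jr}(y_{ij}) / Σ_{l=1}^R ν_l(x_i)·Π_j π_{jl}(y_{ij}), the offsets aᵢ = log(Σ_{l≠r} exp(x_iᵀβ_l)), ψᵢ = x_iᵀβ_r − aᵢ, the Pólya-gamma weights ωᵢ = tanh(ψᵢ/2)/(2ψᵢ) (with ωᵢ = 1/4 if ψᵢ = 0), ηᵢ = (s̄ᵢᵣ − 1/2 + ωᵢ·aᵢ)/ωᵢ, and Ω = diag(ω₁,…,ωₙ). If XᵀΩX is invertible, where X has rows x_iᵀ, then replacing β_r by β_r′ = (XᵀΩX)⁻¹XᵀΩη while keeping all other β_l fixed does not decrease the observed-data log-likelihood: ℓ((β_1,…,β_r′,…,β_{R−1}), π) ≥ ℓ((β_1,…,β_r,…,β_{R−1}), π). -/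

import Mathlib

/-!
As a function of the linear predictor `z = xᵢᵀβ_r`, observation `i` contributes
`log (p eᶻ + C) - log (eᶻ + A)` to `ℓ`, where `A, C > 0` come from the other classes. The first
term is convex in `z`, so it lies above its tangent at the current value, whose slope is the
responsibility `s̄ᵢᵣ`. The second is `a + log (1 + e^(z - a))`, and the Pólya-gamma bound
majorises `log (1 + e^ψ)` by a quadratic in `ψ` with curvature `ωᵢ`, tight at the current `ψᵢ`;
it holds because `t ↦ tanh t / t` decreases on `(0, ∞)`, i.e. because `tanh` is concave there.
Together they give a minorant of `ℓ` that touches it at the current `β_r` and equals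
`-½ Σᵢ ωᵢ (xᵢᵀβ_r - ηᵢ)²` up to a constant; the weighted least squares solution `β_r'`
maximises it.
-/

namespace LCR14

open Matrix

/-- Class probabilities `ν_r(x) = exp(xᵀβ_r)/Σ_l exp(xᵀβ_l)`. -/
noncomputable def nu {P R : ℕ} (xi : Fin P → ℝ) (β : Fin R → Fin P → ℝ) (r : Fin R) : ℝ :=
  Real.exp (∑ p, xi p * β r p) / (∑ l, Real.exp (∑ p, xi p * β l p))

/-- Observed-data log-likelihood
`ℓ(β, π) = Σᵢ log[Σᵣ ν_r(xᵢ)·Πⱼ π_{jr}(y_{ij})]`. -/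
noncomputable def loglik {n P R J : ℕ} {K : Fin J → ℕ}
    (x : Fin n → Fin P → ℝ) (y : ∀ _ : Fin n, ∀ j : Fin J, Fin (K j))
    (β : Fin R → Fin P → ℝ) (π : ∀ j : Fin J, Fin R → Fin (K j) → ℝ) : ℝ :=
  ∑ i, Real.log (∑ r, nu (x i) β r * ∏ j, π j r (y i j))

/-- Responsibilities
`s̄ᵢᵣ = ν_r(xᵢ)·Πⱼ π_{jr}(y_{ij}) / Σ_l ν_l(xᵢ)·Πⱼ π_{jl}(y_{ij})`. -/
noncomputable def sbar {n P R J : ℕ} {K : Fin J → ℕ}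
    (x : Fin n → Fin P → ℝ) (y : ∀ _ : Fin n, ∀ j : Fin J, Fin (K j))
    (β : Fin R → Fin P → ℝ) (π : ∀ j : Fin J, Fin R → Fin (K j) → ℝ)
    (i : Fin n) (r : Fin R) : ℝ :=
  (nu (x i) β r * ∏ j, π j r (y i j)) / (∑ l, nu (x i) β l * ∏ j, π j l (y i j))

section

open Real Set

lemma hasDerivAt_tanh (x : ℝ) : HasDerivAt tanh (1 / cosh x ^ 2) x := by
  have h := (hasDerivAt_sinh x).div (hasDerivAt_cosh x) (cosh_pos x).ne'
  rw [show sinh / cosh = tanh from funext fun y => (tanh_eq_sinh_div_cosh y).symm] at h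
  refine h.congr_deriv ?_
  rw [← cosh_sq_sub_sinh_sq x]
  ring

lemma concaveOn_tanh : ConcaveOn ℝ (Ici 0) tanh := by
  have hderiv : deriv tanh = fun x => 1 / cosh x ^ 2 := funext fun x => (hasDerivAt_tanh x).deriv
  refine AntitoneOn.concaveOn_of_deriv (convex_Ici 0)
    (fun x _ => (hasDerivAt_tanh x).continuousAt.continuousWithinAt)
    (fun x _ => (hasDerivAt_tanh x).differentiableAt.differentiableWithinAt) ?_
  intro x hx y hy hxy
  rw [interior_Ici, mem_Ioi] at hx hy
  have hcosh : cosh x ≤ cosh y := cosh_le_cosh.2 (by rwa [abs_of_pos hx, abs_of_pos hy])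
  simp only [hderiv]
  gcongr

lemma mul_tanh_le_mul_tanh {s t : ℝ} (hs : 0 ≤ s) (hst : s ≤ t) : s * tanh t ≤ t * tanh s := by
  rcases (hs.trans hst).eq_or_lt with rfl | ht
  · simp
  have h := concaveOn_tanh.2 (mem_Ici.2 ht.le) (mem_Ici.2 le_rfl)
    (div_nonneg hs ht.le) (sub_nonneg.2 ((div_le_one ht).2 hst)) (add_sub_cancel _ _)
  simp only [smul_eq_mul, mul_zero, add_zero, tanh_zero, div_mul_cancel₀ s ht.ne'] at h
  rwa [div_mul_eq_mul_div, div_le_iff₀ ht, mul_comm (tanh s)] at h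

lemma hasDerivAt_log_cosh (x : ℝ) : HasDerivAt (fun y => log (cosh y)) (tanh x) x := by
  simpa [← tanh_eq_sinh_div_cosh] using (hasDerivAt_cosh x).log (cosh_pos x).ne'

lemma log_cosh_le_of_pos {t₀ t : ℝ} (ht₀ : 0 < t₀) (ht : 0 ≤ t) :
    log (cosh t) ≤ log (cosh t₀) + tanh t₀ / (2 * t₀) * (t ^ 2 - t₀ ^ 2) := by
  set c := tanh t₀ / (2 * t₀)
  set φ : ℝ → ℝ := fun u => c * u ^ 2 - log (cosh u)
  have hφ (u : ℝ) : HasDerivAt φ (c * (2 * u) - tanh u) u := by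
    refine (((hasDerivAt_pow 2 u).const_mul c).sub (hasDerivAt_log_cosh u)).congr_deriv ?_
    ring
  have hslope (u : ℝ) : deriv φ u = (u * tanh t₀ - t₀ * tanh u) / t₀ := by
    rw [(hφ u).deriv]
    simp only [c]
    field_simp
  have hmin : IsMinOn φ (Ici 0) t₀ :=
    isMinOn_Ici_of_deriv (hφ 0).continuousAt (hφ t₀).continuousAt
      (fun u _ => (hφ u).differentiableAt.differentiableWithinAt)
      (fun u _ => (hφ u).differentiableAt.differentiableWithinAt)
      (fun u hu => by
        rw [hslope]
        exact div_nonpos_of_nonpos_of_nonneg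
          (sub_nonpos.2 (mul_tanh_le_mul_tanh hu.1.le hu.2.le)) ht₀.le)
      (fun u hu => by
        rw [hslope]
        exact div_nonneg (sub_nonneg.2 (mul_tanh_le_mul_tanh ht₀.le hu.le)) ht₀.le)
  have := hmin (mem_Ici.2 ht)
  simp only [mem_ofPred_eq, φ] at this
  linarith

/-- The mean of the Pólya-gamma distribution `PG(1, ψ)`, extended continuously to `ψ = 0`. -/
noncomputable def pgWeight (ψ : ℝ) : ℝ :=
  if ψ = 0 then 1 / 4 else tanh (ψ / 2) / (2 * ψ)

lemma pgWeight_abs (ψ : ℝ) : pgWeight |ψ| = pgWeight ψ := by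
  rcases abs_choice ψ with h | h <;> rw [h]
  simp only [pgWeight, neg_eq_zero, neg_div, tanh_neg]
  split_ifs <;> ring

lemma pgWeight_pos (ψ : ℝ) : 0 < pgWeight ψ := by
  rw [← pgWeight_abs, pgWeight]
  split_ifs with h
  · norm_num
  · have hψ : 0 < |ψ| := lt_of_le_of_ne (abs_nonneg ψ) (Ne.symm h)
    rw [tanh_eq_sinh_div_cosh]
    exact div_pos (div_pos (sinh_pos_iff.2 (half_pos hψ)) (cosh_pos _)) (by positivity)

lemma log_cosh_half_le (ψ₀ ψ : ℝ) :
    log (cosh (ψ / 2)) ≤ log (cosh (ψ₀ / 2)) + pgWeight ψ₀ / 2 * (ψ ^ 2 - ψ₀ ^ 2) := by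
  rcases eq_or_ne ψ₀ 0 with rfl | hψ₀
  · have h := log_le_log (cosh_pos _) (cosh_le_exp_half_sq (ψ / 2))
    rw [log_exp] at h
    simp only [pgWeight, if_true, zero_div, cosh_zero, log_one]
    linarith
  · have hcosh (u : ℝ) : cosh (u / 2) = cosh (|u| / 2) := by rw [← cosh_abs, abs_div, abs_two]
    have h := log_cosh_le_of_pos (t := |ψ| / 2) (half_pos (abs_pos.2 hψ₀)) (by positivity)
    rw [hcosh ψ, hcosh ψ₀, ← pgWeight_abs, pgWeight, if_neg (abs_ne_zero.2 hψ₀), ← sq_abs ψ,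
      ← sq_abs ψ₀]
    convert h using 2
    field_simp

lemma log_one_add_exp_eq (ψ : ℝ) :
    log (1 + exp ψ) = ψ / 2 + log 2 + log (cosh (ψ / 2)) := by
  have h : 1 + exp ψ = exp (ψ / 2) * (2 * cosh (ψ / 2)) := by
    rw [cosh_eq, mul_div_cancel₀ _ two_ne_zero, mul_add, ← exp_add, ← exp_add, add_halves,
      add_neg_cancel, exp_zero, add_comm]
  rw [h, log_mul (exp_pos _).ne' (by positivity), log_exp, log_mul two_ne_zero (cosh_pos _).ne']
  ring

lemma log_one_add_exp_le (ψ₀ ψ : ℝ) :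
    log (1 + exp ψ) ≤
      log (1 + exp ψ₀) + (ψ - ψ₀) / 2 + pgWeight ψ₀ / 2 * (ψ ^ 2 - ψ₀ ^ 2) := by
  rw [log_one_add_exp_eq, log_one_add_exp_eq]
  linarith [log_cosh_half_le ψ₀ ψ]

lemma log_mul_exp_add_ge {p C : ℝ} (hp : 0 < p) (hC : 0 < C) (z₀ z : ℝ) :
    log (p * exp z₀ + C) + p * exp z₀ / (p * exp z₀ + C) * (z - z₀) ≤ log (p * exp z + C) := by
  set s := p * exp z₀ / (p * exp z₀ + C)
  have hD : 0 < p * exp z₀ + C := by positivity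
  have hs₀ : 0 ≤ s := by positivity
  have hs₁ : s ≤ 1 := (div_le_one hD).2 (by linarith)
  have hfactor : p * exp z + C = (p * exp z₀ + C) * (s * exp (z - z₀) + (1 - s)) := by
    rw [exp_sub]
    simp only [s]
    field_simp
    ring
  have hconvex : exp (s * (z - z₀)) ≤ s * exp (z - z₀) + (1 - s) := by
    simpa using convexOn_exp.2 (mem_univ (z - z₀)) (mem_univ 0) hs₀ (sub_nonneg.2 hs₁)
      (add_sub_cancel s 1)
  rw [hfactor, log_mul hD.ne' ((exp_pos _).trans_le hconvex).ne']
  linarith [(le_log_iff_exp_le ((exp_pos _).trans_le hconvex)).2 hconvex]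

lemma log_exp_add_exp (a w : ℝ) : log (exp w + exp a) = a + log (1 + exp (w - a)) := by
  rw [← log_exp a, ← log_mul (exp_pos a).ne' (by positivity), log_exp, mul_add, mul_one,
    ← exp_add, add_sub_cancel, add_comm]

lemma log_mixture_sub_ge {p C : ℝ} (hp : 0 < p) (hC : 0 < C) (a z z' : ℝ) {s ω η : ℝ}
    (hs : s = p * exp z / (p * exp z + C)) (hω : ω = pgWeight (z - a))
    (hη : η = (s - 1 / 2 + ω * a) / ω) :
    ω / 2 * ((z - η) ^ 2 - (z' - η) ^ 2) ≤
      log ((p * exp z' + C) / (exp z' + exp a)) - log ((p * exp z + C) / (exp z + exp a)) := by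
  have hωη : ω * η = s - 1 / 2 + ω * a := by
    rw [hη, mul_div_cancel₀ _ (hω ▸ pgWeight_pos _).ne']
  rw [log_div (by positivity) (by positivity), log_div (by positivity) (by positivity),
    log_exp_add_exp, log_exp_add_exp]
  have htangent := log_mul_exp_add_ge hp hC z z'
  have hpg := log_one_add_exp_le (z - a) (z' - a)
  rw [← hs] at htangent
  rw [← hω] at hpg
  linear_combination htangent + hpg + (z' - z) * hωη

end

section

variable {m k : Type*} [Fintype m] [Fintype k]

lemma weighted_sum_sq_le_of_normal_eq (X : Matrix m k ℝ) {ω η : m → ℝ} (hω : ∀ i, 0 ≤ ω i)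
    {b₀ : k → ℝ} (hb₀ : Xᵀ *ᵥ (ω * (X *ᵥ b₀ - η)) = 0) (b : k → ℝ) :
    ∑ i, ω i * ((X *ᵥ b₀) i - η i) ^ 2 ≤ ∑ i, ω i * ((X *ᵥ b) i - η i) ^ 2 := by
  set e := X *ᵥ b₀ - η
  set d := X *ᵥ (b - b₀)
  have hcross : ∑ i, d i * (ω i * e i) = 0 := by
    change d ⬝ᵥ (ω * e) = 0
    rw [dotProduct_comm, dotProduct_mulVec, ← mulVec_transpose, hb₀, zero_dotProduct]
  have hexpand (i : m) : ω i * ((X *ᵥ b) i - η i) ^ 2 =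
      ω i * e i ^ 2 + 2 * (d i * (ω i * e i)) + ω i * d i ^ 2 := by
    simp only [d, e, mulVec_sub, Pi.sub_apply]
    ring
  simp only [hexpand, Finset.sum_add_distrib, ← Finset.mul_sum, hcross, mul_zero, add_zero]
  exact le_add_of_nonneg_right (Finset.sum_nonneg fun i _ => mul_nonneg (hω i) (sq_nonneg _))

lemma normal_eq_of_isUnit [DecidableEq m] [DecidableEq k] (X : Matrix m k ℝ) (ω η : m → ℝ)
    (h : IsUnit (Xᵀ * diagonal ω * X)) :
    Xᵀ *ᵥ (ω * (X *ᵥ ((Xᵀ * diagonal ω * X)⁻¹ *ᵥ ((Xᵀ * diagonal ω) *ᵥ η)) - η)) = 0 := by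
  set M := Xᵀ * diagonal ω * X
  set v := (Xᵀ * diagonal ω) *ᵥ η
  have hresidual (w : k → ℝ) : Xᵀ *ᵥ (ω * (X *ᵥ w - η)) = M *ᵥ w - v := by
    have hdiag : ω * (X *ᵥ w - η) = diagonal ω *ᵥ (X *ᵥ w - η) :=
      funext fun i => (mulVec_diagonal _ _ i).symm
    simp only [hdiag, M, v, ← mulVec_mulVec, mulVec_sub]
  rw [hresidual, mulVec_mulVec, mul_nonsing_inv _ ((isUnit_iff_isUnit_det _).1 h), one_mulVec,
    sub_self]

end

lemma sum_nu_update_mul {P R : ℕ} (xi : Fin P → ℝ) (β : Fin R → Fin P → ℝ) (r : Fin R)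
    (b : Fin P → ℝ) (q : Fin R → ℝ) :
    ∑ l, nu xi (Function.update β r b) l * q l =
      (q r * Real.exp (∑ p, xi p * b p) +
          ∑ l ∈ Finset.univ.erase r, Real.exp (∑ p, xi p * β l p) * q l) /
        (Real.exp (∑ p, xi p * b p) + ∑ l ∈ Finset.univ.erase r, Real.exp (∑ p, xi p * β l p)) := by
  have hrest (g : Fin R → (Fin P → ℝ) → ℝ) :
      ∑ l ∈ Finset.univ.erase r, g l (Function.update β r b l) =
        ∑ l ∈ Finset.univ.erase r, g l (β l) :=
    Finset.sum_congr rfl fun l hl => by rw [Function.update_of_ne (Finset.ne_of_mem_erase hl)]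
  simp only [nu, div_mul_eq_mul_div, ← Finset.sum_div]
  rw [← Finset.add_sum_erase _ _ (Finset.mem_univ r),
    ← Finset.add_sum_erase _ _ (Finset.mem_univ r), Function.update_self, mul_comm,
    hrest (fun l β => Real.exp (∑ p, xi p * β p) * q l),
    hrest (fun _ β => Real.exp (∑ p, xi p * β p))]

lemma log_sum_nu_update_sub_ge {P R : ℕ} (hR : 2 ≤ R) (xi : Fin P → ℝ)
    (β : Fin R → Fin P → ℝ) (r : Fin R) (b : Fin P → ℝ) {q : Fin R → ℝ} (hq : ∀ l, 0 < q l)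
    {a ω η : ℝ} (ha : a = Real.log (∑ l ∈ Finset.univ.erase r, Real.exp (∑ p, xi p * β l p)))
    (hω : ω = pgWeight ((∑ p, xi p * β r p) - a))
    (hη : η = (nu xi β r * q r / (∑ l, nu xi β l * q l) - 1 / 2 + ω * a) / ω) :
    ω / 2 * (((∑ p, xi p * β r p) - η) ^ 2 - ((∑ p, xi p * b p) - η) ^ 2) ≤
      Real.log (∑ l, nu xi (Function.update β r b) l * q l) - Real.log (∑ l, nu xi β l * q l) := by
  have hothers : (Finset.univ.erase r).Nonempty := by
    have := Fin.nontrivial_iff_two_le.2 hR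
    obtain ⟨l, hl⟩ := exists_ne r
    exact ⟨l, Finset.mem_erase.2 ⟨hl, Finset.mem_univ l⟩⟩
  have hA : 0 < ∑ l ∈ Finset.univ.erase r, Real.exp (∑ p, xi p * β l p) :=
    Finset.sum_pos (fun l _ => Real.exp_pos _) hothers
  have hC : 0 < ∑ l ∈ Finset.univ.erase r, Real.exp (∑ p, xi p * β l p) * q l :=
    Finset.sum_pos (fun l _ => mul_pos (Real.exp_pos _) (hq l)) hothers
  have hmix := sum_nu_update_mul xi β r (β r) q
  rw [Function.update_eq_self] at hmix
  rw [sum_nu_update_mul, hmix, ← Real.exp_log hA, ← ha]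
  refine log_mixture_sub_ge (hq r) hC a _ _ ?_ hω hη
  rw [hmix, nu, ← Finset.add_sum_erase _ _ (Finset.mem_univ r)]
  field_simp

theorem beta_cycle_monotone (n P R J : ℕ) (hR : 2 ≤ R) (K : Fin J → ℕ)
    (x : Fin n → Fin P → ℝ) (y : ∀ _ : Fin n, ∀ j : Fin J, Fin (K j))
    (π : ∀ j : Fin J, Fin R → Fin (K j) → ℝ)
    (hπ_pos : ∀ j r yv, 0 < π j r yv)
    (β : Fin R → Fin P → ℝ) (r : Fin R) (a : Fin n → ℝ)
    (ha : a = fun i => Real.log (∑ l ∈ Finset.univ.erase r, Real.exp (∑ p, x i p * β l p)))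
    (ψ : Fin n → ℝ) (hψ : ψ = fun i => (∑ p, x i p * β r p) - a i)
    (ω : Fin n → ℝ)
    (hω : ω = fun i => if ψ i = 0 then 1 / 4 else Real.tanh (ψ i / 2) / (2 * ψ i))
    (η : Fin n → ℝ)
    (hη : η = fun i => (sbar x y β π i r - 1 / 2 + ω i * a i) / ω i)
    (hinv : IsUnit ((Matrix.of x)ᵀ * Matrix.diagonal ω * Matrix.of x))
    (βr' : Fin P → ℝ)
    (hβr' : βr' = ((Matrix.of x)ᵀ * Matrix.diagonal ω * Matrix.of x)⁻¹ *ᵥ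
        (((Matrix.of x)ᵀ * Matrix.diagonal ω) *ᵥ η)) :
    loglik x y (Function.update β r βr') π ≥ loglik x y β π := by
  have hω_pos (i : Fin n) : 0 < ω i := by
    rw [hω]
    exact pgWeight_pos (ψ i)
  have hobs (i : Fin n) :=
    log_sum_nu_update_sub_ge hR (x i) β r βr' (q := fun l => ∏ j, π j l (y i j))
      (fun l => Finset.prod_pos fun j _ => hπ_pos j l (y i j)) (congrFun ha i)
      (by rw [hω, hψ]; rfl) (congrFun hη i)
  have hwls := weighted_sum_sq_le_of_normal_eq (Matrix.of x) (fun i => (hω_pos i).le)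
    (hβr' ▸ normal_eq_of_isUnit _ ω η hinv) (β r)
  rw [ge_iff_le, ← sub_nonneg, loglik, loglik, ← Finset.sum_sub_distrib]
  calc 0 ≤ (∑ i, ω i * ((Matrix.of x *ᵥ β r) i - η i) ^ 2
          - ∑ i, ω i * ((Matrix.of x *ᵥ βr') i - η i) ^ 2) / 2 := by linarith
    _ = ∑ i, ω i / 2 * (((∑ p, x i p * β r p) - η i) ^ 2 - ((∑ p, x i p * βr' p) - η i) ^ 2) := by
      rw [← Finset.sum_sub_distrib, Finset.sum_div]
      exact Finset.sum_congr rfl fun i _ => by simp only [mulVec, dotProduct, of_apply]; ring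
    _ ≤ _ := Finset.sum_le_sum fun i _ => hobs i

end LCR14
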